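/- arXiv:2510.22125 — 3 statements merged into one kernel-verified Lean document; each statement's English description precedes it below -/
import Mathlib

section
/- Let v : ℝ³ → ℝ³ be a smooth vector field. If the deviatoric gradient dev(grad v) := grad v - (1/3)(div v)·I vanishes identically on a connected open set, then v belongs to the Raviart–Thomas space RT = {a·x + b : a ∈ ℝ, b ∈ ℝ³}, i.e., v(x) = a·x + b for some constant a ∈ ℝ and b ∈ ℝ³. -/
open Matrix

/-- Partial derivative in direction `j`. -/
noncomputable def pd (j : Fin 3) (f : (Fin 3 → ℝ) → ℝ) (x : Fin 3 → ℝ) : ℝ :=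
  fderiv ℝ f x (Pi.single j 1)

/-- Jacobian matrix (grad v)_{ij} = ∂_j v_i. -/
noncomputable def jac (v : (Fin 3 → ℝ) → (Fin 3 → ℝ)) (x : Fin 3 → ℝ) :
    Matrix (Fin 3) (Fin 3) ℝ :=
  Matrix.of fun i j => pd j (fun y => v y i) x

noncomputable def dev (M : Matrix (Fin 3) (Fin 3) ℝ) : Matrix (Fin 3) (Fin 3) ℝ :=
  M - (Matrix.trace M / 3) • (1 : Matrix (Fin 3) (Fin 3) ℝ)

open Filter Topology

/-- Two continuous linear functionals on `Fin 3 → ℝ` that agree on the standard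
basis vectors are equal. -/
lemma clm_ext_single {L M : (Fin 3 → ℝ) →L[ℝ] ℝ}
    (h : ∀ j, L (Pi.single j 1) = M (Pi.single j 1)) : L = M := by
  ext w
  have hsingle : ∀ i : Fin 3, (fun j => if i = j then (1 : ℝ) else 0) = Pi.single i 1 := by
    intro i; ext j; simp [Pi.single_apply, eq_comm]
  have hw := pi_eq_sum_univ w
  conv_lhs => rw [hw]
  conv_rhs => rw [hw]
  rw [map_sum, map_sum]
  refine Finset.sum_congr rfl fun i _ => ?_
  rw [ContinuousLinearMap.map_smul, ContinuousLinearMap.map_smul, hsingle, h]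

/-- A differentiable function with vanishing derivative on a connected open set
is constant there. -/
lemma const_of_fderiv_zero {f : (Fin 3 → ℝ) → ℝ} {Ω : Set (Fin 3 → ℝ)} (hΩo : IsOpen Ω)
    (hΩc : IsPreconnected Ω) (hf : DifferentiableOn ℝ f Ω)
    (h0 : ∀ x ∈ Ω, fderiv ℝ f x = 0) {x₀ : Fin 3 → ℝ} (hx₀ : x₀ ∈ Ω) :
    ∀ x ∈ Ω, f x = f x₀ := by
  have loc : ∀ x ∈ Ω, ∀ᶠ y in 𝓝 x, f y = f x := by
    intro x hx
    rcases Metric.isOpen_iff.1 hΩo x hx with ⟨r, hr, hball⟩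
    filter_upwards [Metric.ball_mem_nhds x hr] with y hy
    refine (convex_ball x r).is_const_of_fderivWithin_eq_zero (hf.mono hball)
      (fun z hz => ?_) hy (Metric.mem_ball_self hr)
    rw [fderivWithin_of_isOpen Metric.isOpen_ball hz]
    exact h0 z (hball hz)
  set U : Set (Fin 3 → ℝ) := {x | x ∈ Ω ∧ f x = f x₀} with hU
  set V : Set (Fin 3 → ℝ) := {x | x ∈ Ω ∧ f x ≠ f x₀} with hV
  have hUo : IsOpen U := by
    rw [isOpen_iff_mem_nhds]
    rintro x ⟨hx, hfx⟩
    filter_upwards [loc x hx, hΩo.mem_nhds hx] with y h1 h2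
    exact ⟨h2, h1.trans hfx⟩
  have hVo : IsOpen V := by
    rw [isOpen_iff_mem_nhds]
    rintro x ⟨hx, hfx⟩
    filter_upwards [loc x hx, hΩo.mem_nhds hx] with y h1 h2
    exact ⟨h2, h1 ▸ hfx⟩
  by_contra hcon
  push_neg at hcon
  obtain ⟨x, hx, hfx⟩ := hcon
  obtain ⟨z, hzΩ, ⟨⟨_, h1⟩, ⟨_, h2⟩⟩⟩ :=
    hΩc U V hUo hVo
      (fun y hy => by
        by_cases hc : f y = f x₀
        · exact Or.inl ⟨hy, hc⟩
        · exact Or.inr ⟨hy, hc⟩)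
      ⟨x₀, hx₀, hx₀, rfl⟩ ⟨x, hx, hx, hfx⟩
  exact h2 h1

/-- If the deviatoric gradient of a smooth vector field vanishes on a connected open
set, then the field is of Raviart–Thomas form `a • x + b` there. -/
theorem devgrad_eq_zero_imp_RT (Ω : Set (Fin 3 → ℝ)) (hΩo : IsOpen Ω)
    (hΩc : IsConnected Ω) (v : (Fin 3 → ℝ) → (Fin 3 → ℝ))
    (hv : ContDiffOn ℝ (⊤ : ℕ∞) v Ω)
    (h : ∀ x ∈ Ω, dev (jac v x) = 0) :
    ∃ (a : ℝ) (b : Fin 3 → ℝ), ∀ x ∈ Ω, v x = a • x + b := by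
  obtain ⟨x₀, hx₀⟩ := hΩc.nonempty
  have hΩp : IsPreconnected Ω := hΩc.isPreconnected
  have hfi : ∀ i, ContDiffOn ℝ (⊤ : ℕ∞) (fun y => v y i) Ω := fun i => contDiffOn_pi.1 hv i
  have hdiffi : ∀ i, ∀ x ∈ Ω, DifferentiableAt ℝ (fun y => v y i) x := fun i x hx =>
    ((hfi i).differentiableOn (by simp)).differentiableAt (hΩo.mem_nhds hx)
  set lam : (Fin 3 → ℝ) → ℝ := fun x => Matrix.trace (jac v x) / 3 with hlamdef
  -- the entrywise consequence of `dev (jac v x) = 0`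
  have key : ∀ x ∈ Ω, ∀ i j, fderiv ℝ (fun y => v y i) x (Pi.single j 1)
      = if i = j then lam x else 0 := by
    intro x hx i j
    have h2 : jac v x = (Matrix.trace (jac v x) / 3) • (1 : Matrix (Fin 3) (Fin 3) ℝ) :=
      sub_eq_zero.1 (h x hx)
    have h3 : jac v x i j
        = ((Matrix.trace (jac v x) / 3) • (1 : Matrix (Fin 3) (Fin 3) ℝ)) i j := by
      rw [← h2]
    simpa [jac, pd, Matrix.one_apply, mul_ite, hlamdef] using h3
  -- second derivatives
  have hC : ∀ i, ContDiffOn ℝ (⊤ : ℕ∞) (fderiv ℝ (fun y => v y i)) Ω := fun i =>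
    (hfi i).fderiv_of_isOpen hΩo (by simp)
  have hfd' : ∀ i, DifferentiableOn ℝ (fderiv ℝ (fun y => v y i)) Ω := fun i =>
    (hC i).differentiableOn (by simp)
  set g : (Fin 3 → ℝ) → ℝ := fun x => fderiv ℝ (fun y => v y 0) x (Pi.single 0 1) with hgdef
  have hglam : ∀ x ∈ Ω, g x = lam x := by
    intro x hx
    simpa [hgdef] using key x hx 0 0
  have hgd : DifferentiableOn ℝ g Ω :=
    (hfd' 0).clm_apply (differentiableOn_const _)
  -- derivative of g vanishes on Ω
  have hg0 : ∀ x ∈ Ω, fderiv ℝ g x = 0 := by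
    intro x hx
    have hgx : DifferentiableAt ℝ g x := (hgd).differentiableAt (hΩo.mem_nhds hx)
    apply clm_ext_single (M := 0)
    intro k
    -- choose i different from k
    set i : Fin 3 := if k = 0 then 1 else 0 with hidef
    have hik : i ≠ k := by
      rcases eq_or_ne k 0 with hk | hk
      · simp [hidef, hk]
      · simp [hidef, hk]; exact fun hc => hk hc.symm
    -- second derivative of component i
    have hF'' : HasFDerivAt (fderiv ℝ (fun y => v y i))
        (fderiv ℝ (fderiv ℝ (fun y => v y i)) x) x :=
      ((hfd' i).differentiableAt (hΩo.mem_nhds hx)).hasFDerivAt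
    have hev : ∀ᶠ y in 𝓝 x, HasFDerivAt (fun y => v y i) (fderiv ℝ (fun y => v y i) y) y := by
      filter_upwards [hΩo.mem_nhds hx] with y hy
      exact (hdiffi i y hy).hasFDerivAt
    have hsymm := second_derivative_symmetric_of_eventually hev hF''
    -- derivative of y ↦ fderiv f_i y w
    have happ : ∀ w : Fin 3 → ℝ, HasFDerivAt (fun y => fderiv ℝ (fun z => v z i) y w)
        ((ContinuousLinearMap.apply ℝ ℝ w).comp (fderiv ℝ (fderiv ℝ (fun y => v y i)) x)) x :=
      fun w => (ContinuousLinearMap.apply ℝ ℝ w).hasFDerivAt.comp x hF''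
    -- the function y ↦ fderiv f_i y e_k is zero near x
    have hzero : fderiv ℝ (fun y => fderiv ℝ (fun z => v z i) y (Pi.single k 1)) x = 0 := by
      have hEq : (fun y => fderiv ℝ (fun z => v z i) y (Pi.single k 1))
          =ᶠ[𝓝 x] fun _ => (0 : ℝ) := by
        filter_upwards [hΩo.mem_nhds hx] with y hy
        simpa [hik] using key y hy i k
      rw [hEq.fderiv_eq]
      exact fderiv_const_apply 0
    have hzero' : ∀ u, fderiv ℝ (fderiv ℝ (fun y => v y i)) x u (Pi.single k 1) = 0 := by
      intro u
      have h4 : ((ContinuousLinearMap.apply ℝ ℝ (Pi.single k 1)).comp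
          (fderiv ℝ (fderiv ℝ (fun y => v y i)) x)) = 0 := by
        rw [← (happ (Pi.single k 1)).fderiv]; exact hzero
      simpa using ContinuousLinearMap.ext_iff.1 h4 u
    -- g agrees near x with y ↦ fderiv f_i y e_i
    have hEqg : g =ᶠ[𝓝 x] fun y => fderiv ℝ (fun z => v z i) y (Pi.single i 1) := by
      filter_upwards [hΩo.mem_nhds hx] with y hy
      have h1 := key y hy i i
      rw [hglam y hy]
      simpa using h1.symm
    have : fderiv ℝ g x (Pi.single k 1)
        = fderiv ℝ (fderiv ℝ (fun y => v y i)) x (Pi.single k 1) (Pi.single i 1) := by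
      rw [hEqg.fderiv_eq, (happ (Pi.single i 1)).fderiv]
      rfl
    rw [this, hsymm, hzero']
    simp
  -- g is constant on Ω
  have hconst := const_of_fderiv_zero hΩo hΩp hgd hg0 hx₀
  set a : ℝ := g x₀ with hadef
  -- the first derivative of each component is a • proj i on Ω
  have hfderiv : ∀ i, ∀ x ∈ Ω, fderiv ℝ (fun y => v y i) x
      = a • (ContinuousLinearMap.proj (R := ℝ) (φ := fun _ : Fin 3 => ℝ) i) := by
    intro i x hx
    apply clm_ext_single
    intro j
    rw [key x hx i j]
    have hax : lam x = a := by rw [← hglam x hx, hconst x hx]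
    rcases eq_or_ne i j with hij | hij
    · subst hij
      simp [hax, ContinuousLinearMap.proj]
    · simp [hij, ContinuousLinearMap.proj, Pi.single_apply, Ne.symm hij]
  -- each component of v minus a • x is constant
  refine ⟨a, fun i => v x₀ i - a * x₀ i, ?_⟩
  intro x hx
  funext i
  have hLd : ∀ y : Fin 3 → ℝ, HasFDerivAt (fun z : Fin 3 → ℝ => a * z i)
      (a • (ContinuousLinearMap.proj (R := ℝ) (φ := fun _ : Fin 3 => ℝ) i)) y := by
    intro y
    exact (a • (ContinuousLinearMap.proj (R := ℝ) (φ := fun _ : Fin 3 => ℝ) i)).hasFDerivAt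
  have hud : DifferentiableOn ℝ (fun z => v z i - a * z i) Ω :=
    ((hfi i).differentiableOn (by simp)).sub (fun y _ => ((hLd y).differentiableAt).differentiableWithinAt)
  have hu0 : ∀ y ∈ Ω, fderiv ℝ (fun z => v z i - a * z i) y = 0 := by
    intro y hy
    have h1 : HasFDerivAt (fun z => v z i - a * z i)
        (fderiv ℝ (fun z => v z i) y - a • (ContinuousLinearMap.proj (R := ℝ)
          (φ := fun _ : Fin 3 => ℝ) i)) y :=
      ((hdiffi i y hy).hasFDerivAt).sub (hLd y)
    rw [h1.fderiv, hfderiv i y hy, sub_self]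
  have := const_of_fderiv_zero hΩo hΩp hud hu0 hx₀ x hx
  have hvx : v x i = a * x i + (v x₀ i - a * x₀ i) := by linarith [this]
  simpa [Pi.add_apply, Pi.smul_apply, smul_eq_mul] using hvx
end

section
/- Brezzi coercivity-on-kernel from exactness: let V, Q be Hilbert spaces, a : V × V → ℝ a bounded symmetric positive semidefinite bilinear form and b : V × Q → ℝ bounded bilinear. Suppose there is α > 0 such that for all v in the kernel K = {v ∈ V : b(v, q) = 0 for all q ∈ Q} one has a(v, v) ≥ α‖v‖². Suppose also b satisfies the inf-sup condition with constant β > 0. Then for every bounded linear functional f on V the saddle-point problem a(u, v) + b(v, p) = f(v), b(u, q) = 0 (for all v ∈ V, q ∈ Q) has a unique solution (u, p) ∈ V × Q, with ‖u‖ + ‖p‖ ≤ C‖f‖ for C depending only on α, β, and the bounds of a and b. -/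
/-!
Lax–Milgram on the closed kernel `K = ker b` gives `u ∈ K` with `a u = f` on `K`. The inf-sup
condition says that `q ↦ b(·, q)` is bounded below, so the Riesz representatives of these
functionals form a closed subspace; its orthogonal complement is `K`, hence it is `Kᗮ`, and the
residual `f - a u`, which vanishes on `K`, is `b(·, p)` for some `p`. Testing the equations with `u`
and using the inf-sup bound gives `α ‖u‖ ≤ ‖f‖` and `β ‖p‖ ≤ ‖f‖ + ‖a‖ ‖u‖` for every solution; by
linearity these a priori bounds also give uniqueness.
-/

open InnerProductSpace RealInnerProductSpace

theorem iSup_div_norm_le_opNorm {E : Type*} [NormedAddCommGroup E] [NormedSpace ℝ E]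
    (g : E →L[ℝ] ℝ) : ⨆ (v : E) (_ : v ≠ 0), g v / ‖v‖ ≤ ‖g‖ :=
  Real.iSup_le (fun v => Real.iSup_le (fun hv => by
      rw [div_le_iff₀ (norm_pos_iff.mpr hv)]
      exact (le_abs_self _).trans (g.le_opNorm v)) (norm_nonneg _)) (norm_nonneg _)

section Riesz

variable {V Q : Type*} [NormedAddCommGroup V] [InnerProductSpace ℝ V] [CompleteSpace V]
  [NormedAddCommGroup Q] [NormedSpace ℝ Q]

noncomputable def toDualSymmComp (T : Q →L[ℝ] V →L[ℝ] ℝ) : Q →L[ℝ] V :=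
  LinearMap.mkContinuous
    { toFun := fun q => (toDual ℝ V).symm (T q)
      map_add' := fun q q' => by simp
      map_smul' := fun r q => by simp }
    ‖T‖ fun q => by simpa using T.le_opNorm q

@[simp]
theorem inner_toDualSymmComp_apply (T : Q →L[ℝ] V →L[ℝ] ℝ) (q : Q) (v : V) :
    ⟪toDualSymmComp T q, v⟫_ℝ = T q v := by
  simp [toDualSymmComp, toDual_symm_apply]

@[simp]
theorem norm_toDualSymmComp_apply (T : Q →L[ℝ] V →L[ℝ] ℝ) (q : Q) :
    ‖toDualSymmComp T q‖ = ‖T q‖ := by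
  simp [toDualSymmComp]

theorem orthogonal_range_toDualSymmComp_flip (b : V →L[ℝ] Q →L[ℝ] ℝ) :
    (toDualSymmComp b.flip).rangeᗮ = b.ker := by
  ext v
  simp [Submodule.mem_orthogonal, ContinuousLinearMap.ext_iff]

theorem exists_flip_eq_of_ker_le [CompleteSpace Q] (b : V →L[ℝ] Q →L[ℝ] ℝ) {β : ℝ} (hβ : 0 < β)
    (hb : ∀ q, β * ‖q‖ ≤ ‖b.flip q‖) {g : V →L[ℝ] ℝ} (hg : b.ker ≤ g.ker) :
    ∃ p, b.flip p = g := by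
  set R := toDualSymmComp b.flip
  have hR : AntilipschitzWith (Real.toNNReal β⁻¹) R := R.antilipschitz_of_bound fun q => by
    rw [Real.coe_toNNReal _ (inv_nonneg.mpr hβ.le), le_inv_mul_iff₀ hβ, norm_toDualSymmComp_apply]
    exact hb q
  have hclosed : IsClosed (R.range : Set V) := by
    rw [LinearMap.coe_range]
    exact hR.isClosed_range R.uniformContinuous
  have hw : (toDual ℝ V).symm g ∈ R.range := by
    rw [← hclosed.submodule_topologicalClosure_eq, ← Submodule.orthogonal_orthogonal_eq_closure,
      orthogonal_range_toDualSymmComp_flip, Submodule.mem_orthogonal']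
    intro v hv
    rw [toDual_symm_apply]
    exact hg hv
  obtain ⟨p, hp⟩ := hw
  refine ⟨p, ContinuousLinearMap.ext fun v => ?_⟩
  rw [← inner_toDualSymmComp_apply]
  exact (congrArg (⟪·, v⟫_ℝ) hp).trans toDual_symm_apply

end Riesz

theorem exists_mem_forall_apply_eq_of_coercive_on {V : Type*} [NormedAddCommGroup V]
    [InnerProductSpace ℝ V] (K : Submodule ℝ V) [CompleteSpace K] (a : V →L[ℝ] V →L[ℝ] ℝ)
    {α : ℝ} (hα : 0 < α) (hcoer : ∀ v ∈ K, α * ‖v‖ ^ 2 ≤ a v v) (f : V →L[ℝ] ℝ) :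
    ∃ u ∈ K, ∀ v ∈ K, a u v = f v := by
  set aK := a.bilinearComp K.subtypeL K.subtypeL
  have hK : IsCoercive aK := ⟨α, hα, fun v => by simpa [aK, sq, mul_assoc] using hcoer v v.2⟩
  set e := hK.continuousLinearEquivOfBilin
  set w := (toDual ℝ K).symm (f.comp K.subtypeL)
  refine ⟨e.symm w, Submodule.coe_mem _, fun v hv => ?_⟩
  have h : ⟪e (e.symm w), ⟨v, hv⟩⟫_ℝ = aK (e.symm w) ⟨v, hv⟩ :=
    hK.continuousLinearEquivOfBilin_apply _ _
  rw [e.apply_symm_apply] at h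
  simpa [aK, w, toDual_symm_apply] using h.symm

section Brezzi

variable {V Q : Type*} [NormedAddCommGroup V] [InnerProductSpace ℝ V]
  [NormedAddCommGroup Q] [NormedSpace ℝ Q]

def IsSaddlePointSolution (a : V →L[ℝ] V →L[ℝ] ℝ) (b : V →L[ℝ] Q →L[ℝ] ℝ) (f : V →L[ℝ] ℝ)
    (u : V) (p : Q) : Prop :=
  (∀ v, a u v + b v p = f v) ∧ ∀ q, b u q = 0

namespace IsSaddlePointSolution

variable {a : V →L[ℝ] V →L[ℝ] ℝ} {b : V →L[ℝ] Q →L[ℝ] ℝ} {f f' : V →L[ℝ] ℝ} {u u' : V} {p p' : Q}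

theorem sub (h : IsSaddlePointSolution a b f u p) (h' : IsSaddlePointSolution a b f' u' p') :
    IsSaddlePointSolution a b (f - f') (u - u') (p - p') :=
  ⟨fun v => by simp [← h.1 v, ← h'.1 v]; ring, fun q => by simp [h.2 q, h'.2 q]⟩

theorem mul_norm_fst_le (h : IsSaddlePointSolution a b f u p) {α : ℝ}
    (hcoer : ∀ v, (∀ q, b v q = 0) → α * ‖v‖ ^ 2 ≤ a v v) : α * ‖u‖ ≤ ‖f‖ := by
  have hauu : a u u = f u := by simpa [h.2 p] using h.1 u
  have : α * ‖u‖ * ‖u‖ ≤ ‖f‖ * ‖u‖ := calc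
    α * ‖u‖ * ‖u‖ = α * ‖u‖ ^ 2 := by ring
    _ ≤ a u u := hcoer u h.2
    _ ≤ ‖f‖ * ‖u‖ := hauu ▸ (le_abs_self _).trans (f.le_opNorm u)
  rcases (norm_nonneg u).eq_or_lt with hu | hu
  · simp [← hu]
  · exact le_of_mul_le_mul_right this hu

theorem mul_norm_snd_le (h : IsSaddlePointSolution a b f u p) {β : ℝ}
    (hb : ∀ q, β * ‖q‖ ≤ ‖b.flip q‖) : β * ‖p‖ ≤ ‖f‖ + ‖a‖ * ‖u‖ := by
  have hbp : b.flip p = f - a u :=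
    ContinuousLinearMap.ext fun v => by simp [← h.1 v]
  calc β * ‖p‖ ≤ ‖f - a u‖ := hbp ▸ hb p
    _ ≤ ‖f‖ + ‖a u‖ := norm_sub_le _ _
    _ ≤ ‖f‖ + ‖a‖ * ‖u‖ := by grw [a.le_opNorm u]

theorem norm_add_norm_le (h : IsSaddlePointSolution a b f u p) {α β : ℝ} (hα : 0 < α)
    (hcoer : ∀ v, (∀ q, b v q = 0) → α * ‖v‖ ^ 2 ≤ a v v) (hβ : 0 < β)
    (hb : ∀ q, β * ‖q‖ ≤ ‖b.flip q‖) :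
    ‖u‖ + ‖p‖ ≤ (α⁻¹ + β⁻¹ * (1 + ‖a‖ * α⁻¹)) * ‖f‖ := by
  have hu : ‖u‖ ≤ α⁻¹ * ‖f‖ := (le_inv_mul_iff₀ hα).mpr (h.mul_norm_fst_le hcoer)
  have hp : ‖p‖ ≤ β⁻¹ * (‖f‖ + ‖a‖ * ‖u‖) := (le_inv_mul_iff₀ hβ).mpr (h.mul_norm_snd_le hb)
  calc ‖u‖ + ‖p‖ ≤ α⁻¹ * ‖f‖ + β⁻¹ * (‖f‖ + ‖a‖ * ‖u‖) := by gcongr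
    _ ≤ α⁻¹ * ‖f‖ + β⁻¹ * (‖f‖ + ‖a‖ * (α⁻¹ * ‖f‖)) := by gcongr
    _ = _ := by ring

end IsSaddlePointSolution

theorem exists_isSaddlePointSolution [CompleteSpace V] [CompleteSpace Q]
    (a : V →L[ℝ] V →L[ℝ] ℝ) (b : V →L[ℝ] Q →L[ℝ] ℝ) {α β : ℝ} (hα : 0 < α)
    (hcoer : ∀ v, (∀ q, b v q = 0) → α * ‖v‖ ^ 2 ≤ a v v) (hβ : 0 < β)
    (hb : ∀ q, β * ‖q‖ ≤ ‖b.flip q‖) (f : V →L[ℝ] ℝ) :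
    ∃ u p, IsSaddlePointSolution a b f u p := by
  obtain ⟨u, hu, hau⟩ := exists_mem_forall_apply_eq_of_coercive_on b.ker a hα
    (fun v hv => hcoer v (DFunLike.congr_fun (LinearMap.mem_ker.mp hv))) f
  obtain ⟨p, hp⟩ := exists_flip_eq_of_ker_le b hβ hb (g := f - a u)
    fun v hv => by simp [hau v hv]
  refine ⟨u, p, fun v => ?_, DFunLike.congr_fun hu⟩
  have := DFunLike.congr_fun hp v
  simp only [ContinuousLinearMap.flip_apply, sub_apply] at this
  linarith

end Brezzi

theorem brezzi_saddle_point_wellposed_general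
    {V Q : Type*}
    [NormedAddCommGroup V] [InnerProductSpace ℝ V] [CompleteSpace V]
    [NormedAddCommGroup Q] [InnerProductSpace ℝ Q] [CompleteSpace Q]
    (a : V →L[ℝ] V →L[ℝ] ℝ) (b : V →L[ℝ] Q →L[ℝ] ℝ)
    (α : ℝ) (hα : 0 < α)
    (hcoer : ∀ v : V, (∀ q : Q, b v q = 0) → α * ‖v‖ ^ 2 ≤ a v v)
    (β : ℝ) (hβ : 0 < β)
    (hinfsup : ∀ q : Q, β * ‖q‖ ≤ ⨆ (v : V) (_ : v ≠ 0), b v q / ‖v‖) :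
    ∃ C > 0, ∀ f : V →L[ℝ] ℝ,
      ∃ (u : V) (p : Q),
        (∀ v : V, a u v + b v p = f v) ∧ (∀ q : Q, b u q = 0) ∧
        ‖u‖ + ‖p‖ ≤ C * ‖f‖ ∧
        ∀ (u' : V) (p' : Q),
          ((∀ v : V, a u' v + b v p' = f v) ∧ (∀ q : Q, b u' q = 0)) →
          u' = u ∧ p' = p := by
  have hb : ∀ q, β * ‖q‖ ≤ ‖b.flip q‖ :=
    fun q => (hinfsup q).trans (iSup_div_norm_le_opNorm (b.flip q))
  refine ⟨α⁻¹ + β⁻¹ * (1 + ‖a‖ * α⁻¹), by positivity, fun f => ?_⟩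
  obtain ⟨u, p, hsol⟩ := exists_isSaddlePointSolution a b hα hcoer hβ hb f
  refine ⟨u, p, hsol.1, hsol.2, hsol.norm_add_norm_le hα hcoer hβ hb, fun u' p' hsol' => ?_⟩
  have hdiff := (IsSaddlePointSolution.sub hsol' hsol).norm_add_norm_le hα hcoer hβ hb
  rw [sub_self, norm_zero, mul_zero] at hdiff
  obtain ⟨hu, hp⟩ := (add_eq_zero_iff_of_nonneg (norm_nonneg _) (norm_nonneg _)).mp
    (le_antisymm hdiff (by positivity))
  exact ⟨norm_sub_eq_zero_iff.mp hu, norm_sub_eq_zero_iff.mp hp⟩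

/-- Brezzi theory: coercivity on the kernel plus the inf-sup condition give
well-posedness of the saddle-point problem, with a stability bound. -/
theorem brezzi_saddle_point_wellposed
    {V Q : Type*}
    [NormedAddCommGroup V] [InnerProductSpace ℝ V] [CompleteSpace V]
    [NormedAddCommGroup Q] [InnerProductSpace ℝ Q] [CompleteSpace Q]
    (a : V →L[ℝ] V →L[ℝ] ℝ) (b : V →L[ℝ] Q →L[ℝ] ℝ)
    (hsym : ∀ u v : V, a u v = a v u)
    (hpsd : ∀ v : V, 0 ≤ a v v)
    (α : ℝ) (hα : 0 < α)
    (hcoer : ∀ v : V, (∀ q : Q, b v q = 0) → α * ‖v‖ ^ 2 ≤ a v v)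
    (β : ℝ) (hβ : 0 < β)
    (hinfsup : ∀ q : Q, β * ‖q‖ ≤ ⨆ (v : V) (_ : v ≠ 0), b v q / ‖v‖) :
    ∃ C > 0, ∀ f : V →L[ℝ] ℝ,
      ∃ (u : V) (p : Q),
        (∀ v : V, a u v + b v p = f v) ∧ (∀ q : Q, b u q = 0) ∧
        ‖u‖ + ‖p‖ ≤ C * ‖f‖ ∧
        ∀ (u' : V) (p' : Q),
          ((∀ v : V, a u' v + b v p' = f v) ∧ (∀ q : Q, b u' q = 0)) →
          u' = u ∧ p' = p :=
  brezzi_saddle_point_wellposed_general a b α hα hcoer β hβ hinfsup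
end

section
/- For any smooth matrix field p : ℝ³ → ℝ^{3×3}, the identity div div (sym curl p) = 0 holds, where curl acts row-wise, sym is the symmetric part, and div div is the double row-wise divergence. -/
open Matrix

open Matrix

/-- Hessian matrix (∂_i ∂_j u). -/
noncomputable def hess (u : (Fin 3 → ℝ) → ℝ) (x : Fin 3 → ℝ) :
    Matrix (Fin 3) (Fin 3) ℝ :=
  Matrix.of fun i j => pd i (pd j u) x

/-- Row-wise divergence of a matrix field. -/
noncomputable def divMat (τ : (Fin 3 → ℝ) → Matrix (Fin 3) (Fin 3) ℝ)
    (x : Fin 3 → ℝ) : Fin 3 → ℝ :=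
  fun i => ∑ j, pd j (fun y => τ y i j) x

/-- Divergence of a vector field. -/
noncomputable def divVec (u : (Fin 3 → ℝ) → (Fin 3 → ℝ)) (x : Fin 3 → ℝ) : ℝ :=
  ∑ j, pd j (fun y => u y j) x

/-- Gradient of a scalar field. -/
noncomputable def gradScalar (f : (Fin 3 → ℝ) → ℝ) (x : Fin 3 → ℝ) : Fin 3 → ℝ :=
  fun i => pd i f x

/-- Laplacian of a scalar field. -/
noncomputable def lap (f : (Fin 3 → ℝ) → ℝ) (x : Fin 3 → ℝ) : ℝ :=
  ∑ j, pd j (pd j f) x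

/-- Entrywise Laplacian of a matrix field. -/
noncomputable def lapMat (τ : (Fin 3 → ℝ) → Matrix (Fin 3) (Fin 3) ℝ)
    (x : Fin 3 → ℝ) : Matrix (Fin 3) (Fin 3) ℝ :=
  Matrix.of fun i j => lap (fun y => τ y i j) x

/-- Row-wise curl of a matrix field. -/
noncomputable def curlMat (τ : (Fin 3 → ℝ) → Matrix (Fin 3) (Fin 3) ℝ)
    (x : Fin 3 → ℝ) : Matrix (Fin 3) (Fin 3) ℝ :=
  Matrix.of fun i j =>
    pd (j + 1) (fun y => τ y i (j + 2)) x - pd (j + 2) (fun y => τ y i (j + 1)) x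

/-- Symmetric part of a matrix. -/
noncomputable def symPart (M : Matrix (Fin 3) (Fin 3) ℝ) : Matrix (Fin 3) (Fin 3) ℝ :=
  (1 / 2 : ℝ) • (M + Mᵀ)

/- ### Auxiliary lemmas -/

lemma pd_contDiff {f : (Fin 3 → ℝ) → ℝ} (hf : ContDiff ℝ (⊤ : ℕ∞) f) (j : Fin 3) :
    ContDiff ℝ (⊤ : ℕ∞) (pd j f) := by
  have h1 : ContDiff ℝ (⊤ : ℕ∞) (fderiv ℝ f) := hf.fderiv_right (by simp)
  exact (ContinuousLinearMap.apply ℝ ℝ (Pi.single j 1 : Fin 3 → ℝ)).contDiff.comp h1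

lemma diffAt {f : (Fin 3 → ℝ) → ℝ} (hf : ContDiff ℝ (⊤ : ℕ∞) f) (x : Fin 3 → ℝ) :
    DifferentiableAt ℝ f x := (hf.differentiable (by simp)).differentiableAt

lemma pd_sub {f g : (Fin 3 → ℝ) → ℝ} (j : Fin 3) (x : Fin 3 → ℝ)
    (hf : DifferentiableAt ℝ f x) (hg : DifferentiableAt ℝ g x) :
    pd j (fun y => f y - g y) x = pd j f x - pd j g x := by
  unfold pd; rw [fderiv_fun_sub hf hg]; rfl

lemma pd_add {f g : (Fin 3 → ℝ) → ℝ} (j : Fin 3) (x : Fin 3 → ℝ)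
    (hf : DifferentiableAt ℝ f x) (hg : DifferentiableAt ℝ g x) :
    pd j (fun y => f y + g y) x = pd j f x + pd j g x := by
  unfold pd; rw [fderiv_fun_add hf hg]; rfl

lemma pd_const_mul {f : (Fin 3 → ℝ) → ℝ} (j : Fin 3) (x : Fin 3 → ℝ) (c : ℝ)
    (hf : DifferentiableAt ℝ f x) :
    pd j (fun y => c * f y) x = c * pd j f x := by
  unfold pd; rw [fderiv_const_mul hf c]; rfl

lemma pd_sum {ι : Type*} (s : Finset ι) (F : ι → (Fin 3 → ℝ) → ℝ) (j : Fin 3) (x : Fin 3 → ℝ)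
    (h : ∀ k ∈ s, DifferentiableAt ℝ (F k) x) :
    pd j (fun y => ∑ k ∈ s, F k y) x = ∑ k ∈ s, pd j (F k) x := by
  unfold pd; rw [fderiv_fun_sum h, ContinuousLinearMap.sum_apply]

lemma pd_comm {f : (Fin 3 → ℝ) → ℝ} (hf : ContDiff ℝ (⊤ : ℕ∞) f) (i j : Fin 3) (x : Fin 3 → ℝ) :
    pd i (pd j f) x = pd j (pd i f) x := by
  have hd : ∀ y, HasFDerivAt f (fderiv ℝ f y) y :=
    fun y => (diffAt hf y).hasFDerivAt
  have h1 : ContDiff ℝ (⊤ : ℕ∞) (fderiv ℝ f) := hf.fderiv_right (by simp)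
  have hx : HasFDerivAt (fderiv ℝ f) (fderiv ℝ (fderiv ℝ f) x) x :=
    ((h1.differentiable (by simp)).differentiableAt).hasFDerivAt
  have hsymm := second_derivative_symmetric hd hx
  have key : ∀ a b : Fin 3,
      pd a (pd b f) x = fderiv ℝ (fderiv ℝ f) x (Pi.single a 1) (Pi.single b 1) := by
    intro a b
    have hF : HasFDerivAt
        (fun y => (ContinuousLinearMap.apply ℝ ℝ (Pi.single b 1 : Fin 3 → ℝ)) (fderiv ℝ f y))
        ((ContinuousLinearMap.apply ℝ ℝ (Pi.single b 1 : Fin 3 → ℝ)).comp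
          (fderiv ℝ (fderiv ℝ f) x)) x :=
      ((ContinuousLinearMap.apply ℝ ℝ (Pi.single b 1 : Fin 3 → ℝ)).hasFDerivAt).comp x hx
    have h2 : fderiv ℝ (pd b f) x
        = (ContinuousLinearMap.apply ℝ ℝ (Pi.single b 1 : Fin 3 → ℝ)).comp
          (fderiv ℝ (fderiv ℝ f) x) := hF.fderiv
    show fderiv ℝ (pd b f) x (Pi.single a 1) = _
    rw [h2]; rfl
  rw [key i j, key j i, hsymm]

lemma pd_comm_fun {f : (Fin 3 → ℝ) → ℝ} (hf : ContDiff ℝ (⊤ : ℕ∞) f) (i j : Fin 3) :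
    pd i (pd j f) = pd j (pd i f) :=
  funext fun x => pd_comm hf i j x

/-- Entries of the row-wise curl, as scalar fields. -/
noncomputable def Cf (p : (Fin 3 → ℝ) → Matrix (Fin 3) (Fin 3) ℝ) (i j : Fin 3) :
    (Fin 3 → ℝ) → ℝ :=
  fun y => pd (j + 1) (fun z => p z i (j + 2)) y - pd (j + 2) (fun z => p z i (j + 1)) y

/-- Entries of the symmetric part of the curl, as scalar fields. -/
noncomputable def Ef (p : (Fin 3 → ℝ) → Matrix (Fin 3) (Fin 3) ℝ) (i j : Fin 3) :
    (Fin 3 → ℝ) → ℝ :=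
  fun y => (1 / 2 : ℝ) * (Cf p i j y + Cf p j i y)

lemma Cf_contDiff {p : (Fin 3 → ℝ) → Matrix (Fin 3) (Fin 3) ℝ}
    (hp : ∀ i j, ContDiff ℝ (⊤ : ℕ∞) (fun y => p y i j)) (i j : Fin 3) :
    ContDiff ℝ (⊤ : ℕ∞) (Cf p i j) :=
  (pd_contDiff (hp i (j + 2)) (j + 1)).sub (pd_contDiff (hp i (j + 1)) (j + 2))

lemma Ef_contDiff {p : (Fin 3 → ℝ) → Matrix (Fin 3) (Fin 3) ℝ}
    (hp : ∀ i j, ContDiff ℝ (⊤ : ℕ∞) (fun y => p y i j)) (i j : Fin 3) :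
    ContDiff ℝ (⊤ : ℕ∞) (Ef p i j) :=
  contDiff_const.mul ((Cf_contDiff hp i j).add (Cf_contDiff hp j i))

/-- For any smooth matrix field `p`, `div div (sym curl p) = 0`. -/
theorem divdiv_sym_curl_eq_zero (p : (Fin 3 → ℝ) → Matrix (Fin 3) (Fin 3) ℝ)
    (hp : ∀ i j, ContDiff ℝ (⊤ : ℕ∞) (fun y => p y i j)) :
    ∀ x, divVec (divMat (fun y => symPart (curlMat p y))) x = 0 := by
  intro x
  have hEntry : ∀ i j : Fin 3, (fun y => symPart (curlMat p y) i j) = Ef p i j := by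
    intro i j; funext y
    simp [symPart, curlMat, Ef, Cf, Matrix.smul_apply, Matrix.add_apply,
      Matrix.transpose_apply, smul_eq_mul, Matrix.of_apply]
  have goal_eq : divVec (divMat (fun y => symPart (curlMat p y))) x
      = ∑ i : Fin 3, pd i (fun y => ∑ j : Fin 3, pd j (Ef p i j) y) x := by
    unfold divVec divMat
    simp only [hEntry]
  rw [goal_eq]
  have step1 : ∀ i : Fin 3, pd i (fun y => ∑ j : Fin 3, pd j (Ef p i j) y) x
      = ∑ j : Fin 3, pd i (pd j (Ef p i j)) x := fun i =>
    pd_sum Finset.univ (fun j => pd j (Ef p i j)) i x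
      (fun j _ => diffAt (pd_contDiff (Ef_contDiff hp i j) j) x)
  simp only [step1]
  have hpdE : ∀ i j : Fin 3, pd j (Ef p i j)
      = fun y => (1 / 2 : ℝ) * (pd j (Cf p i j) y + pd j (Cf p j i) y) := by
    intro i j; funext y
    unfold Ef
    rw [pd_const_mul j y _
        ((diffAt (Cf_contDiff hp i j) y).fun_add (diffAt (Cf_contDiff hp j i) y)),
      pd_add j y (diffAt (Cf_contDiff hp i j) y) (diffAt (Cf_contDiff hp j i) y)]
  have step2 : ∀ i j : Fin 3, pd i (pd j (Ef p i j)) x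
      = (1 / 2 : ℝ) * (pd i (pd j (Cf p i j)) x + pd i (pd j (Cf p j i)) x) := by
    intro i j
    rw [hpdE i j]
    rw [pd_const_mul i x _
        ((diffAt (pd_contDiff (Cf_contDiff hp i j) j) x).fun_add
          (diffAt (pd_contDiff (Cf_contDiff hp j i) j) x)),
      pd_add i x (diffAt (pd_contDiff (Cf_contDiff hp i j) j) x)
        (diffAt (pd_contDiff (Cf_contDiff hp j i) j) x)]
  simp only [step2]
  have hCsplit : ∀ i j : Fin 3, pd i (pd j (Cf p i j)) x
      = pd i (pd j (pd (j + 1) (fun z => p z i (j + 2)))) x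
        - pd i (pd j (pd (j + 2) (fun z => p z i (j + 1)))) x := by
    intro i j
    have h1 : pd j (Cf p i j)
        = fun y => pd j (pd (j + 1) (fun z => p z i (j + 2))) y
            - pd j (pd (j + 2) (fun z => p z i (j + 1))) y := by
      funext y; unfold Cf
      exact pd_sub j y (diffAt (pd_contDiff (hp i (j + 2)) (j + 1)) y)
        (diffAt (pd_contDiff (hp i (j + 1)) (j + 2)) y)
    rw [h1, pd_sub i x
        (diffAt (pd_contDiff (pd_contDiff (hp i (j + 2)) (j + 1)) j) x)
        (diffAt (pd_contDiff (pd_contDiff (hp i (j + 1)) (j + 2)) j) x)]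
  have hA0 : ∑ i : Fin 3, ∑ j : Fin 3, pd i (pd j (Cf p i j)) x = 0 := by
    refine Finset.sum_eq_zero fun i _ => ?_
    simp only [hCsplit]
    rw [Fin.sum_univ_three]
    simp only [show ((0:Fin 3)+1) = 1 from rfl, show ((0:Fin 3)+2) = 2 from rfl,
      show ((1:Fin 3)+1) = 2 from rfl, show ((1:Fin 3)+2) = 0 from rfl,
      show ((2:Fin 3)+1) = 0 from rfl, show ((2:Fin 3)+2) = 1 from rfl]
    rw [pd_comm_fun (hp i 2) 1 0, pd_comm_fun (hp i 1) 2 0, pd_comm_fun (hp i 0) 2 1]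
    ring
  have hBA : ∑ i : Fin 3, ∑ j : Fin 3, pd i (pd j (Cf p j i)) x
      = ∑ i : Fin 3, ∑ j : Fin 3, pd i (pd j (Cf p i j)) x := by
    rw [Finset.sum_comm]
    exact Finset.sum_congr rfl fun i _ => Finset.sum_congr rfl fun j _ =>
      pd_comm (Cf_contDiff hp i j) j i x
  simp only [mul_add, Finset.sum_add_distrib, ← Finset.mul_sum]
  rw [hBA, hA0]
  ring
end
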